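/- arXiv:cs/0502080 — 4 statements merged into one kernel-verified Lean document; each statement's English description precedes it below -/
import Mathlib

section
/- For every fixed Γ > 0, as a → 1⁻ one has P(a,Γ) → 0 and K(a,Γ) → 0; that is, for the perfectly correlated signal the error exponent vanishes for any SNR. -/
/-! `P(a, Γ)` is continuous in `a` and vanishes at `a = 1`. The quantity `P̃` degenerates to `0/0`
there, but clearing the Kalman gain gives `P̃ = a²P²/((1+P)² − a²)`, and for `P > 0` the
denominator is at least `2P`, so `0 ≤ P̃ ≤ P/2`. Hence `P̃ → 0` as well, and `K` is continuous
in `(P, P̃)` at `(0, 0)`, where it vanishes. -/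

/-- The steady-state prediction error variance `P(a, Γ)`: the unique positive root of
`P² + (1 − a²)(1 − Γ)P − Γ(1 − a²) = 0`, given in closed form. -/
noncomputable def Pss (a Γ : ℝ) : ℝ :=
  ((1 - a ^ 2) * (Γ - 1) +
    Real.sqrt ((1 - a ^ 2) ^ 2 * (1 - Γ) ^ 2 + 4 * Γ * (1 - a ^ 2))) / 2

/-- The steady-state Kalman gain factor `K_p = a·P/(1+P)`. -/
noncomputable def Kgain (a Γ : ℝ) : ℝ := a * Pss a Γ / (1 + Pss a Γ)

/-- `P̃ = K_p²/(1 − (a − K_p)²)`, the solution of the Lyapunov equation. -/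
noncomputable def Ptilde (a Γ : ℝ) : ℝ :=
  (Kgain a Γ) ^ 2 / (1 - (a - Kgain a Γ) ^ 2)

/-- The closed-form error exponent `K(a, Γ) = ½·log(1+P) + ½·(1+P̃)/(1+P) − ½`. -/
noncomputable def Kexp (a Γ : ℝ) : ℝ :=
  (1 / 2) * Real.log (1 + Pss a Γ) + (1 / 2) * (1 + Ptilde a Γ) / (1 + Pss a Γ) - 1 / 2

open Filter Topology

lemma Pss_pos {a Γ : ℝ} (hΓ : 0 < Γ) (ha : a ^ 2 < 1) : 0 < Pss a Γ := by
  have hb : 0 < 1 - a ^ 2 := by linarith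
  have hsqrt : (1 - a ^ 2) * (1 - Γ) <
      Real.sqrt ((1 - a ^ 2) ^ 2 * (1 - Γ) ^ 2 + 4 * Γ * (1 - a ^ 2)) :=
    Real.lt_sqrt_of_sq_lt (by nlinarith)
  unfold Pss
  linarith

lemma continuous_Pss (Γ : ℝ) : Continuous fun a => Pss a Γ := by
  unfold Pss
  fun_prop

lemma Pss_one (Γ : ℝ) : Pss 1 Γ = 0 := by
  simp [Pss]

lemma tendsto_Pss_nhdsLT_one (Γ : ℝ) : Tendsto (fun a => Pss a Γ) (𝓝[<] 1) (𝓝 0) := by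
  simpa only [Pss_one] using
    ((continuous_Pss Γ).continuousWithinAt (s := Set.Iio 1) (x := 1)).tendsto

lemma Ptilde_eq {a Γ : ℝ} (h : 1 + Pss a Γ ≠ 0) :
    Ptilde a Γ = a ^ 2 * Pss a Γ ^ 2 / ((1 + Pss a Γ) ^ 2 - a ^ 2) := by
  rw [Ptilde, Kgain]
  set p := Pss a Γ
  rw [show 1 - (a - a * p / (1 + p)) ^ 2 = ((1 + p) ^ 2 - a ^ 2) / (1 + p) ^ 2 by
    field_simp; ring]
  field_simp

lemma sq_mul_sq_div_le_half {a p : ℝ} (hp : 0 < p) (ha : a ^ 2 ≤ 1) :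
    a ^ 2 * p ^ 2 / ((1 + p) ^ 2 - a ^ 2) ≤ p / 2 :=
  calc a ^ 2 * p ^ 2 / ((1 + p) ^ 2 - a ^ 2) ≤ p ^ 2 / (2 * p) :=
        div_le_div₀ (by positivity) (by nlinarith) (by positivity) (by nlinarith)
    _ = p / 2 := by field_simp

lemma Ptilde_nonneg {a Γ : ℝ} (hΓ : 0 < Γ) (ha : a ^ 2 < 1) : 0 ≤ Ptilde a Γ := by
  have hP := Pss_pos hΓ ha
  rw [Ptilde_eq (by positivity)]
  exact div_nonneg (by positivity) (by nlinarith)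

lemma Ptilde_le_half_Pss {a Γ : ℝ} (hΓ : 0 < Γ) (ha : a ^ 2 < 1) :
    Ptilde a Γ ≤ Pss a Γ / 2 := by
  have hP := Pss_pos hΓ ha
  rw [Ptilde_eq (by positivity)]
  exact sq_mul_sq_div_le_half hP ha.le

lemma eventually_sq_lt_one_nhdsLT_one : ∀ᶠ a : ℝ in 𝓝[<] 1, a ^ 2 < 1 := by
  filter_upwards [Ioo_mem_nhdsLT (show (-1 : ℝ) < 1 by norm_num)] with a ha
  exact (sq_lt_one_iff_abs_lt_one a).2 (abs_lt.2 ha)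

lemma tendsto_Ptilde_nhdsLT_one {Γ : ℝ} (hΓ : 0 < Γ) :
    Tendsto (fun a => Ptilde a Γ) (𝓝[<] 1) (𝓝 0) := by
  refine squeeze_zero' (eventually_sq_lt_one_nhdsLT_one.mono fun a => Ptilde_nonneg hΓ)
    (eventually_sq_lt_one_nhdsLT_one.mono fun a => Ptilde_le_half_Pss hΓ) ?_
  simpa using (tendsto_Pss_nhdsLT_one Γ).div_const 2

/-- For every fixed `Γ > 0`, as `a → 1⁻` one has `P(a,Γ) → 0` and `K(a,Γ) → 0`:
for the perfectly correlated signal the error exponent vanishes for any SNR. -/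
theorem errorExponent_tendsto_zero_at_perfect_correlation (Γ : ℝ) (hΓ : 0 < Γ) :
    Filter.Tendsto (fun a => Pss a Γ) (nhdsWithin 1 (Set.Iio 1)) (nhds 0) ∧
    Filter.Tendsto (fun a => Kexp a Γ) (nhdsWithin 1 (Set.Iio 1)) (nhds 0) := by
  have hP := tendsto_Pss_nhdsLT_one Γ
  have hPt := tendsto_Ptilde_nhdsLT_one hΓ
  have h1P : Tendsto (fun a => 1 + Pss a Γ) (𝓝[<] 1) (𝓝 1) := by
    simpa using hP.const_add 1
  have hK := (((h1P.log one_ne_zero).const_mul (1 / 2)).add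
    (((hPt.const_add 1).const_mul (1 / 2)).div h1P one_ne_zero)).sub_const (1 / 2)
  refine ⟨hP, ?_⟩
  simpa [Kexp] using hK
end

section
/- Fix σ² > 0, Π₀ > 0 and q > 0, and for each n ≥ 1 let P_M(n) be the measure that the centered real Gaussian measure with variance Π₀ + σ²/n assigns to the interval [−qσ/√n, qσ/√n]. Then √n · P_M(n) → 2qσ/√(2πΠ₀) as n → ∞; in particular P_M(n) = Θ(1/√n). (This is the miss probability of the size-α Neyman–Pearson test for a perfectly correlated Gaussian signal, taking q to be the (1−α/2) standard normal quantile.) -/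
/-!
On `[μ - c, μ + c]` the Gaussian density lies between its values at `μ + c` and at `μ`, so the
mass of that interval divided by its length `2c` tends to the density at the mean as `c → 0`,
even while the variance moves continuously to a nonzero limit. With `c = qσ/√n` we have
`√n = 2qσ / (2c)`, and the density at the mean for the limiting variance `Π₀` is `1/√(2πΠ₀)`.
-/

open MeasureTheory ProbabilityTheory Filter Topology Set
open scoped NNReal

lemma Real.volume_real_Icc_sub_add (a : ℝ) {c : ℝ} (hc : 0 ≤ c) :
    volume.real (Icc (a - c) (a + c)) = 2 * c := by
  rw [Real.volume_real_Icc_of_le (by linarith)]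
  ring

namespace ProbabilityTheory

variable {μ : ℝ} {v : ℝ≥0}

lemma gaussianPDFReal_le_gaussianPDFReal {x y : ℝ} (h : (x - μ) ^ 2 ≤ (y - μ) ^ 2) :
    gaussianPDFReal μ v y ≤ gaussianPDFReal μ v x := by
  unfold gaussianPDFReal
  gcongr

lemma continuousAt_gaussianPDFReal {v₀ : ℝ≥0} (hv₀ : v₀ ≠ 0) (x₀ : ℝ) :
    ContinuousAt (fun p : ℝ≥0 × ℝ => gaussianPDFReal μ p.1 p.2) (v₀, x₀) := by
  have : (0 : ℝ) < v₀ := by positivity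
  unfold gaussianPDFReal
  fun_prop (disch := positivity)

lemma gaussianReal_real_eq_integral (hv : v ≠ 0) (s : Set ℝ) :
    (gaussianReal μ v).real s = ∫ x in s, gaussianPDFReal μ v x := by
  rw [measureReal_def, gaussianReal_apply_eq_integral _ hv, ENNReal.toReal_ofReal
    (setIntegral_nonneg_of_ae_restrict (ae_of_all _ (gaussianPDFReal_nonneg _ _)))]

lemma mul_gaussianPDFReal_le_gaussianReal_real_Icc (hv : v ≠ 0) {c : ℝ} (hc : 0 ≤ c) :
    2 * c * gaussianPDFReal μ v (μ + c) ≤ (gaussianReal μ v).real (Icc (μ - c) (μ + c)) := by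
  rw [gaussianReal_real_eq_integral hv, mul_comm, ← Real.volume_real_Icc_sub_add μ hc]
  refine setIntegral_ge_of_const_le_real measurableSet_Icc (by simp) (fun x hx => ?_)
    (integrable_gaussianPDFReal μ v).integrableOn
  exact gaussianPDFReal_le_gaussianPDFReal (sq_le_sq' (by linarith [hx.1]) (by linarith [hx.2]))

lemma gaussianReal_real_Icc_le_mul_gaussianPDFReal (hv : v ≠ 0) {c : ℝ} (hc : 0 ≤ c) :
    (gaussianReal μ v).real (Icc (μ - c) (μ + c)) ≤ 2 * c * gaussianPDFReal μ v μ := by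
  rw [gaussianReal_real_eq_integral hv, mul_comm, ← Real.volume_real_Icc_sub_add μ hc]
  refine (Real.le_norm_self _).trans (norm_setIntegral_le_of_norm_le_const (by simp) fun x _ => ?_)
  rw [Real.norm_of_nonneg (gaussianPDFReal_nonneg _ _ _)]
  exact gaussianPDFReal_le_gaussianPDFReal (by simp [sq_nonneg])

theorem tendsto_gaussianReal_real_Icc_div {ι : Type*} {l : Filter ι} {v : ι → ℝ≥0} {v₀ : ℝ≥0}
    (hv₀ : v₀ ≠ 0) (hv : Tendsto v l (𝓝 v₀)) {c : ι → ℝ} (hc : Tendsto c l (𝓝[>] 0)) :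
    Tendsto (fun i => (gaussianReal μ (v i)).real (Icc (μ - c i) (μ + c i)) / (2 * c i)) l
      (𝓝 (gaussianPDFReal μ v₀ μ)) := by
  have hc₀ : Tendsto c l (𝓝 0) := tendsto_nhds_of_tendsto_nhdsWithin hc
  have hpdf {x : ι → ℝ} (hx : Tendsto x l (𝓝 μ)) :
      Tendsto (fun i => gaussianPDFReal μ (v i) (x i)) l (𝓝 (gaussianPDFReal μ v₀ μ)) :=
    (continuousAt_gaussianPDFReal hv₀ μ).tendsto.comp (hv.prodMk_nhds hx)
  refine tendsto_of_tendsto_of_tendsto_of_le_of_le' (hpdf (by simpa using hc₀.const_add μ))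
    (hpdf tendsto_const_nhds) ?_ ?_
  all_goals
    filter_upwards [hv.eventually_ne hv₀, (tendsto_nhdsWithin_iff.mp hc).2] with i hvi hci
  · rw [le_div_iff₀ (mul_pos two_pos hci), mul_comm]
    exact mul_gaussianPDFReal_le_gaussianReal_real_Icc hvi hci.le
  · rw [div_le_iff₀ (mul_pos two_pos hci), mul_comm]
    exact gaussianReal_real_Icc_le_mul_gaussianPDFReal hvi hci.le

end ProbabilityTheory

open Real in
/-- Fix `σ > 0`, `Π₀ > 0` and `q > 0`, and for each `n` let `P_M(n)` be the measure that the
centered real Gaussian with variance `Π₀ + σ²/n` assigns to `[−qσ/√n, qσ/√n]` (the miss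
probability of the size-`α` Neyman–Pearson test for a perfectly correlated signal, `q` being
the `(1−α/2)` standard normal quantile). Then `√n · P_M(n) → 2qσ/√(2πΠ₀)`, so that
`P_M(n) = Θ(1/√n)`. -/
theorem miss_probability_perfectly_correlated (σ Pi0 q : ℝ)
    (hσ : 0 < σ) (hPi : 0 < Pi0) (hq : 0 < q) :
    Filter.Tendsto
      (fun n : ℕ =>
        Real.sqrt n *
          ((gaussianReal 0 ((Pi0 + σ ^ 2 / n).toNNReal))
              (Set.Icc (-(q * σ / Real.sqrt n)) (q * σ / Real.sqrt n))).toReal)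
      Filter.atTop
      (nhds (2 * q * σ / Real.sqrt (2 * Real.pi * Pi0))) := by
  have hvar : Tendsto (fun n : ℕ => (Pi0 + σ ^ 2 / n).toNNReal) atTop (𝓝 Pi0.toNNReal) :=
    (continuous_real_toNNReal.tendsto _).comp
      (by simpa using (tendsto_const_div_atTop_nhds_zero_nat (σ ^ 2)).const_add Pi0)
  have hwidth : Tendsto (fun n : ℕ => q * σ / √n) atTop (𝓝[>] 0) := by
    refine tendsto_nhdsWithin_iff.mpr ⟨tendsto_const_nhds.div_atTop
      (tendsto_sqrt_atTop.comp tendsto_natCast_atTop_atTop), ?_⟩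
    filter_upwards [eventually_gt_atTop 0] with n hn
    exact mem_Ioi.mpr (by positivity)
  have hratio := (tendsto_gaussianReal_real_Icc_div (μ := 0)
    (Real.toNNReal_pos.mpr hPi).ne' hvar hwidth).const_mul (2 * q * σ)
  have hlimit : 2 * q * σ * gaussianPDFReal 0 Pi0.toNNReal 0 = 2 * q * σ / √(2 * π * Pi0) := by
    simp [gaussianPDFReal, hPi.le, div_eq_mul_inv]
  rw [← hlimit]
  refine hratio.congr' ?_
  filter_upwards [eventually_gt_atTop 0] with n hn
  simp only [zero_sub, zero_add, measureReal_def]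
  field_simp
end

section
/- For every fixed Γ with 0 < Γ < 1, there exists a* ∈ (0,1) such that K(a*,Γ) ≥ K(a,Γ) for all a ∈ [0,1), and moreover K(a*,Γ) > K(0,Γ); i.e., for SNR below one a nonzero correlation strictly improves the error exponent over independent samples. -/
open Real Filter Topology Set

lemma HasDerivAt.eventually_lt_nhdsGT {f : ℝ → ℝ} {f' x : ℝ} (hf : HasDerivAt f f' x)
    (hf' : 0 < f') : ∀ᶠ y in 𝓝[>] x, f x < f y := by
  have := (hasDerivAt_iff_tendsto_slope.mp hf).mono_left (nhdsGT_le_nhdsNE x)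
  filter_upwards [this.eventually (eventually_gt_nhds hf'), self_mem_nhdsWithin] with y hy hxy
  exact (slope_pos_iff hxy).mp hy

lemma ContinuousOn.exists_isMaxOn_Ico {f : ℝ → ℝ} {a b x₀ : ℝ} (hf : ContinuousOn f (Ico a b))
    (hx₀ : x₀ ∈ Ico a b) (hb : ∀ᶠ x in 𝓝[<] b, f x ≤ f x₀) :
    ∃ x ∈ Ico a b, IsMaxOn f (Ico a b) x := by
  obtain ⟨c, hcb, hc⟩ := (mem_nhdsLT_iff_exists_Ioo_subset' hx₀.2).mp hb
  have hsub : Icc a (max c x₀) ⊆ Ico a b := Icc_subset_Ico_right (max_lt hcb hx₀.2)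
  obtain ⟨x, hx, hmax⟩ := isCompact_Icc.exists_isMaxOn ⟨x₀, hx₀.1, le_max_right c x₀⟩
    (hf.mono hsub)
  refine ⟨x, hsub hx, fun y hy => ?_⟩
  rcases le_or_gt y (max c x₀) with hyc | hyc
  · exact hmax ⟨hy.1, hyc⟩
  · exact le_trans (hc ⟨(le_max_left c x₀).trans_lt hyc, hy.2⟩)
      (isMaxOn_iff.mp hmax x₀ ⟨hx₀.1, le_max_right c x₀⟩)

/-- `K(0, x)`: the exponent for independent samples at SNR `x`. -/
noncomputable def iidExponent (x : ℝ) : ℝ := (log (1 + x) + (1 + x)⁻¹ - 1) / 2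

/-- `Pss a Γ` and `Kexp a Γ` depend on `a` only through `s = a²`; in this variable
`P̃ = s P² / ((1 + P)² - s)`. -/
noncomputable def PssOfSq (s Γ : ℝ) : ℝ :=
  ((1 - s) * (Γ - 1) + √((1 - s) ^ 2 * (1 - Γ) ^ 2 + 4 * Γ * (1 - s))) / 2

noncomputable def KexpOfSq (s Γ : ℝ) : ℝ :=
  iidExponent (PssOfSq s Γ) +
    s * PssOfSq s Γ ^ 2 / (2 * (1 + PssOfSq s Γ) * ((1 + PssOfSq s Γ) ^ 2 - s))

lemma iidExponent_nonneg {x : ℝ} (hx : -1 < x) : 0 ≤ iidExponent x := by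
  have := one_sub_inv_le_log_of_pos (show 0 < 1 + x by linarith)
  unfold iidExponent
  linarith

lemma hasDerivAt_iidExponent {x : ℝ} (hx : 1 + x ≠ 0) :
    HasDerivAt iidExponent (x / (2 * (1 + x) ^ 2)) x := by
  have h1 : HasDerivAt (fun y => 1 + y) 1 x := (hasDerivAt_id x).const_add 1
  refine ((((h1.log hx).fun_add (h1.fun_inv hx)).sub_const 1).div_const 2).congr_deriv ?_
  field_simp
  ring

section

variable {s Γ : ℝ}

lemma PssOfSq_pos (hΓ : 0 < Γ) (hs : s < 1) : 0 < PssOfSq s Γ := by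
  have : (1 - s) * (1 - Γ) < √((1 - s) ^ 2 * (1 - Γ) ^ 2 + 4 * Γ * (1 - s)) :=
    lt_sqrt_of_sq_lt (by nlinarith [mul_pos hΓ (sub_pos.2 hs)])
  unfold PssOfSq
  linarith

lemma PssOfSq_zero (hΓ : 0 ≤ Γ) : PssOfSq 0 Γ = Γ := by
  rw [PssOfSq, show (1 - 0) ^ 2 * (1 - Γ) ^ 2 + 4 * Γ * (1 - 0) = (1 + Γ) ^ 2 by ring,
    sqrt_sq (by linarith)]
  ring

lemma PssOfSq_one : PssOfSq 1 Γ = 0 := by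
  simp [PssOfSq]

lemma continuous_PssOfSq : Continuous (PssOfSq · Γ) := by
  unfold PssOfSq
  fun_prop

lemma hasDerivAt_PssOfSq_zero (hΓ : 0 < Γ) :
    HasDerivAt (PssOfSq · Γ) (-Γ ^ 2 / (1 + Γ)) 0 := by
  have h1 : HasDerivAt (fun s : ℝ => 1 - s) (-1) 0 := (hasDerivAt_id' 0).const_sub 1
  have hq : HasDerivAt (fun s => (1 - s) ^ 2 * (1 - Γ) ^ 2 + 4 * Γ * (1 - s))
      (-2 * (1 + Γ ^ 2)) 0 := by
    refine (((h1.fun_pow 2).mul_const ((1 - Γ) ^ 2)).fun_add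
      (h1.const_mul (4 * Γ))).congr_deriv ?_
    ring
  have hq0 : (1 - 0) ^ 2 * (1 - Γ) ^ 2 + 4 * Γ * (1 - 0) = (1 + Γ) ^ 2 := by ring
  have hsqrt := hq.sqrt (by rw [hq0]; positivity)
  refine (((h1.mul_const (Γ - 1)).fun_add hsqrt).div_const 2).congr_deriv ?_
  rw [hq0, sqrt_sq (by linarith)]
  field_simp
  ring

lemma Kexp_eq_KexpOfSq {a : ℝ} (hΓ : 0 < Γ) (ha : a ^ 2 < 1) :
    Kexp a Γ = KexpOfSq (a ^ 2) Γ := by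
  have hPss : Pss a Γ = PssOfSq (a ^ 2) Γ := rfl
  rw [Kexp, KexpOfSq, iidExponent]
  set P := PssOfSq (a ^ 2) Γ
  have hP : 0 < P := PssOfSq_pos hΓ ha
  have hden : (1 + P) ^ 2 - a ^ 2 ≠ 0 := by nlinarith
  have hgap : a - Kgain a Γ = a / (1 + P) := by
    rw [Kgain, hPss]
    field_simp
    ring
  have hPtilde : Ptilde a Γ = a ^ 2 * P ^ 2 / ((1 + P) ^ 2 - a ^ 2) := by
    rw [Ptilde, hgap, Kgain, hPss, div_pow, div_pow, one_sub_div (by positivity)]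
    field_simp
  rw [hPtilde, hPss]
  field_simp
  ring

lemma KexpOfSq_nonneg (hΓ : 0 < Γ) (hs₀ : 0 ≤ s) (hs₁ : s < 1) : 0 ≤ KexpOfSq s Γ := by
  have hP := PssOfSq_pos hΓ hs₁
  have hden : 0 < (1 + PssOfSq s Γ) ^ 2 - s := by nlinarith
  unfold KexpOfSq
  have := iidExponent_nonneg (x := PssOfSq s Γ) (by linarith)
  positivity

lemma KexpOfSq_le_PssOfSq (hΓ : 0 < Γ) (hs : s < 1) : KexpOfSq s Γ ≤ PssOfSq s Γ := by
  set P := PssOfSq s Γ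
  have hP : 0 < P := PssOfSq_pos hΓ hs
  have hden : 0 < 2 * (1 + P) * ((1 + P) ^ 2 - s) := by
    have : 0 < (1 + P) ^ 2 - s := by nlinarith
    positivity
  have hlog : log (1 + P) ≤ P := by linarith [log_le_sub_one_of_pos (by linarith : 0 < 1 + P)]
  have hinv : (1 + P)⁻¹ ≤ 1 := inv_le_one_of_one_le₀ (by linarith)
  have hfrac : s * P ^ 2 / (2 * (1 + P) * ((1 + P) ^ 2 - s)) ≤ P / 2 := by
    rw [div_le_iff₀ hden]
    nlinarith [mul_pos hP hP, mul_pos (mul_pos hP hP) hP]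
  rw [KexpOfSq, iidExponent]
  linarith

lemma tendsto_KexpOfSq_one (hΓ : 0 < Γ) : Tendsto (KexpOfSq · Γ) (𝓝[<] 1) (𝓝 0) := by
  have hP : Tendsto (PssOfSq · Γ) (𝓝[<] 1) (𝓝 0) := by
    simpa [PssOfSq_one] using (continuous_PssOfSq.tendsto 1).mono_left nhdsWithin_le_nhds
  refine tendsto_of_tendsto_of_tendsto_of_le_of_le' tendsto_const_nhds hP ?_ ?_
  · filter_upwards [Ioo_mem_nhdsLT one_pos] with s hs using KexpOfSq_nonneg hΓ hs.1.le hs.2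
  · filter_upwards [self_mem_nhdsWithin] with s hs using KexpOfSq_le_PssOfSq hΓ hs

lemma continuousOn_KexpOfSq (hΓ : 0 < Γ) : ContinuousOn (KexpOfSq · Γ) (Iio 1) := by
  refine continuousOn_of_forall_continuousAt fun s hs => ?_
  have hP := PssOfSq_pos hΓ hs
  have h₁ : 1 + PssOfSq s Γ ≠ 0 := by positivity
  have h₂ : 2 * (1 + PssOfSq s Γ) * ((1 + PssOfSq s Γ) ^ 2 - s) ≠ 0 := by
    have : 0 < (1 + PssOfSq s Γ) ^ 2 - s := by nlinarith [mem_Iio.mp hs]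
    positivity
  have := continuous_PssOfSq (Γ := Γ)
  unfold KexpOfSq iidExponent
  fun_prop (disch := assumption)

lemma hasDerivAt_KexpOfSq_zero (hΓ : 0 < Γ) :
    HasDerivAt (KexpOfSq · Γ) (Γ ^ 2 * (1 - Γ) / (2 * (1 + Γ) ^ 3)) 0 := by
  have hP := hasDerivAt_PssOfSq_zero hΓ
  have hP₀ : PssOfSq 0 Γ = Γ := PssOfSq_zero hΓ.le
  have hiid : HasDerivAt iidExponent (Γ / (2 * (1 + Γ) ^ 2)) (PssOfSq 0 Γ) := by
    rw [hP₀]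
    exact hasDerivAt_iidExponent (by positivity)
  have h₁ : 1 + PssOfSq 0 Γ ≠ 0 := by rw [hP₀]; positivity
  have h₂ : 2 * (1 + PssOfSq 0 Γ) * ((1 + PssOfSq 0 Γ) ^ 2 - 0) ≠ 0 := by
    rw [hP₀, sub_zero]; positivity
  have hdiff := hP.differentiableAt
  have hrest : DifferentiableAt ℝ
      (fun s => PssOfSq s Γ ^ 2 / (2 * (1 + PssOfSq s Γ) * ((1 + PssOfSq s Γ) ^ 2 - s))) 0 := by
    fun_prop (disch := assumption)
  simp only [KexpOfSq, mul_div_assoc]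
  refine ((hiid.comp 0 hP).fun_add ((hasDerivAt_id' 0).fun_mul hrest.hasDerivAt)).congr_deriv ?_
  rw [hP₀, zero_mul, add_zero, one_mul, sub_zero]
  field_simp
  ring

end

/-- For every fixed `0 < Γ < 1` there exists `astar ∈ (0,1)` maximizing `K(·,Γ)` over `[0,1)`,
and this maximum strictly exceeds the value at zero correlation. -/
theorem exists_optimal_correlation_of_snr_lt_one (Γ : ℝ) (hΓ0 : 0 < Γ) (hΓ1 : Γ < 1) :
    ∃ astar ∈ Set.Ioo (0 : ℝ) 1,
      (∀ a ∈ Set.Ico (0 : ℝ) 1, Kexp a Γ ≤ Kexp astar Γ) ∧ Kexp 0 Γ < Kexp astar Γ := by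
  have hderiv_pos : 0 < Γ ^ 2 * (1 - Γ) / (2 * (1 + Γ) ^ 3) := by
    have := sub_pos.2 hΓ1
    positivity
  obtain ⟨s₀, hgt, hs₀⟩ := (((hasDerivAt_KexpOfSq_zero hΓ0).eventually_lt_nhdsGT hderiv_pos).and
    (Ioo_mem_nhdsGT one_pos)).exists
  have hnear : ∀ᶠ s in 𝓝[<] 1, KexpOfSq s Γ ≤ KexpOfSq s₀ Γ :=
    (tendsto_KexpOfSq_one hΓ0).eventually
      (ge_mem_nhds ((KexpOfSq_nonneg hΓ0 le_rfl one_pos).trans_lt hgt))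
  obtain ⟨s, hs, hmax⟩ := ((continuousOn_KexpOfSq hΓ0).mono Ico_subset_Iio_self).exists_isMaxOn_Ico
      ⟨hs₀.1.le, hs₀.2⟩ hnear
  have hlt : KexpOfSq 0 Γ < KexpOfSq s Γ := hgt.trans_le (hmax ⟨hs₀.1.le, hs₀.2⟩)
  have hs_pos : 0 < s := hs.1.lt_of_ne (by rintro rfl; exact hlt.false)
  have hKexp_sqrt : Kexp (√s) Γ = KexpOfSq s Γ := by
    rw [Kexp_eq_KexpOfSq hΓ0 (by rw [sq_sqrt hs.1]; exact hs.2), sq_sqrt hs.1]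
  refine ⟨√s, ⟨sqrt_pos.2 hs_pos, (sqrt_lt' one_pos).2 (by simpa using hs.2)⟩, fun a ha => ?_, ?_⟩
  · have ha2 : a ^ 2 ∈ Ico (0 : ℝ) 1 := ⟨sq_nonneg a, by nlinarith [ha.1, ha.2]⟩
    rw [hKexp_sqrt, Kexp_eq_KexpOfSq hΓ0 ha2.2]
    exact hmax ha2
  · rw [hKexp_sqrt, Kexp_eq_KexpOfSq hΓ0 (by norm_num)]
    simpa using hlt
end

section
/- For every fixed a ∈ [0,1), K(a,Γ)/log Γ → ½ as Γ → ∞; i.e., at high SNR the error exponent grows linearly with ½·log SNR. -/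
lemma Pss_lower (a Γ : ℝ) (ha0 : 0 ≤ a) (ha1 : a < 1) (hΓ : 1 ≤ Γ) :
    (1 - a ^ 2) * (Γ - 1) ≤ Pss a Γ := by
  have hc : 0 < 1 - a ^ 2 := by nlinarith
  have h1 : ((1 - a ^ 2) * (Γ - 1)) ^ 2 ≤ (1 - a ^ 2) ^ 2 * (1 - Γ) ^ 2 + 4 * Γ * (1 - a ^ 2) := by
    nlinarith
  have h2 : (1 - a ^ 2) * (Γ - 1) ≤
      Real.sqrt ((1 - a ^ 2) ^ 2 * (1 - Γ) ^ 2 + 4 * Γ * (1 - a ^ 2)) := by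
    have := Real.sqrt_le_sqrt h1
    rwa [Real.sqrt_sq (by nlinarith)] at this
  unfold Pss
  linarith

lemma Pss_upper (a Γ : ℝ) (ha0 : 0 ≤ a) (ha1 : a < 1) (hΓ : 1 ≤ Γ) :
    Pss a Γ ≤ (1 - a ^ 2) * (Γ - 1) + 1 := by
  have hc : 0 < 1 - a ^ 2 := by nlinarith
  have hcle : 1 - a ^ 2 ≤ 1 := by nlinarith
  have h1 : (1 - a ^ 2) ^ 2 * (1 - Γ) ^ 2 + 4 * Γ * (1 - a ^ 2) ≤
      ((1 - a ^ 2) * (Γ - 1) + 2) ^ 2 := by nlinarith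
  have h2 : Real.sqrt ((1 - a ^ 2) ^ 2 * (1 - Γ) ^ 2 + 4 * Γ * (1 - a ^ 2)) ≤
      (1 - a ^ 2) * (Γ - 1) + 2 := by
    have := Real.sqrt_le_sqrt h1
    rwa [Real.sqrt_sq (by nlinarith)] at this
  unfold Pss
  linarith

lemma Ptilde_bounds (a Γ : ℝ) (ha0 : 0 ≤ a) (ha1 : a < 1) (hP0 : 0 ≤ Pss a Γ) :
    0 ≤ Ptilde a Γ ∧ Ptilde a Γ ≤ 1 / (1 - a ^ 2) := by
  have hc : 0 < 1 - a ^ 2 := by nlinarith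
  set P := Pss a Γ with hP
  have h1P : 0 < 1 + P := by linarith
  have hK0 : 0 ≤ Kgain a Γ := div_nonneg (mul_nonneg ha0 hP0) h1P.le
  have hKa : Kgain a Γ ≤ a := by
    rw [Kgain, ← hP, div_le_iff₀ h1P]; nlinarith
  have haK : a - Kgain a Γ = a / (1 + P) := by
    rw [Kgain, ← hP]; field_simp; ring
  have haK0 : 0 ≤ a - Kgain a Γ := by rw [haK]; positivity
  have haKa : a - Kgain a Γ ≤ a := by
    rw [haK]; exact div_le_self ha0 (by linarith)
  have hden : 1 - a ^ 2 ≤ 1 - (a - Kgain a Γ) ^ 2 := by nlinarith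
  have hdenpos : 0 < 1 - (a - Kgain a Γ) ^ 2 := lt_of_lt_of_le hc hden
  constructor
  · exact div_nonneg (sq_nonneg _) hdenpos.le
  · rw [Ptilde]
    exact div_le_div₀ zero_le_one (by nlinarith) hc hden

/-- For every fixed `a ∈ [0,1)`, `K(a,Γ)/log Γ → ½` as `Γ → ∞`: at high SNR the error
exponent grows like `½·log SNR`. -/
theorem errorExponent_asymptotic_high_snr (a : ℝ) (ha0 : 0 ≤ a) (ha1 : a < 1) :
    Filter.Tendsto (fun Γ => Kexp a Γ / Real.log Γ) Filter.atTop (nhds (1 / 2)) := by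
  have hc : 0 < 1 - a ^ 2 := by nlinarith
  set c := 1 - a ^ 2 with hcdef
  set M : ℝ := (|Real.log (c / 2)| + |Real.log (c + 1)|) / 2 + (1 + 1 / c) / 2 + 1 / 2 with hM
  have key : ∀ᶠ Γ in Filter.atTop, |Kexp a Γ / Real.log Γ - 1 / 2| ≤ M / Real.log Γ := by
    filter_upwards [Filter.eventually_ge_atTop (2 : ℝ)] with Γ hΓ
    have hΓ1 : (1 : ℝ) ≤ Γ := by linarith
    have hΓ0 : (0 : ℝ) < Γ := by linarith
    have hL : 0 < Real.log Γ := Real.log_pos (by linarith)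
    have hPl := Pss_lower a Γ ha0 ha1 hΓ1
    have hPu := Pss_upper a Γ ha0 ha1 hΓ1
    set P := Pss a Γ with hPdef
    have hP0 : 0 ≤ P := le_trans (by nlinarith) hPl
    have h1P : (0 : ℝ) < 1 + P := by linarith
    obtain ⟨hPt0, hPt1⟩ := Ptilde_bounds a Γ ha0 ha1 hP0
    have hcle : c ≤ 1 := by rw [hcdef]; nlinarith
    -- bounds on (1+P)/Γ
    have hx1 : c / 2 ≤ (1 + P) / Γ := by
      rw [le_div_iff₀ hΓ0]; nlinarith
    have hx2 : (1 + P) / Γ ≤ c + 1 := by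
      rw [div_le_iff₀ hΓ0]; nlinarith
    have hxpos : 0 < (1 + P) / Γ := div_pos h1P hΓ0
    have hlog1 : Real.log (c / 2) ≤ Real.log ((1 + P) / Γ) :=
      Real.log_le_log (by positivity) hx1
    have hlog2 : Real.log ((1 + P) / Γ) ≤ Real.log (c + 1) :=
      Real.log_le_log hxpos hx2
    have hLabs : |Real.log ((1 + P) / Γ)| ≤ |Real.log (c / 2)| + |Real.log (c + 1)| := by
      rw [abs_le]
      constructor
      · have := neg_abs_le (Real.log (c / 2))
        have h2 := abs_nonneg (Real.log (c + 1))
        linarith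
      · have := le_abs_self (Real.log (c + 1))
        have h2 := abs_nonneg (Real.log (c / 2))
        linarith
    have hlogdiv : Real.log ((1 + P) / Γ) = Real.log (1 + P) - Real.log Γ :=
      Real.log_div h1P.ne' hΓ0.ne'
    -- bound term2
    have hterm2a : 0 ≤ (1 + Ptilde a Γ) / (1 + P) :=
      div_nonneg (by linarith) h1P.le
    have hterm2b : (1 + Ptilde a Γ) / (1 + P) ≤ 1 + 1 / c := by
      calc (1 + Ptilde a Γ) / (1 + P) ≤ 1 + Ptilde a Γ :=
            div_le_self (by linarith) (by linarith)
        _ ≤ 1 + 1 / c := by linarith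
    -- bound |Kexp - (1/2) log Γ| ≤ M
    have hKbound : |Kexp a Γ - 1 / 2 * Real.log Γ| ≤ M := by
      have hKe : Kexp a Γ - 1 / 2 * Real.log Γ =
          1 / 2 * Real.log ((1 + P) / Γ) + 1 / 2 * ((1 + Ptilde a Γ) / (1 + P)) - 1 / 2 := by
        rw [Kexp, hlogdiv, ← hPdef]; ring
      rw [hKe, abs_le, hM]
      have h1 := neg_abs_le (Real.log ((1 + P) / Γ))
      have h2 := le_abs_self (Real.log ((1 + P) / Γ))
      constructor <;> linarith
    have heq : Kexp a Γ / Real.log Γ - 1 / 2 =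
        (Kexp a Γ - 1 / 2 * Real.log Γ) / Real.log Γ := by
      rw [sub_div]
      congr 1
      field_simp
    rw [heq, abs_div, abs_of_pos hL]
    gcongr
  have h0 : Filter.Tendsto (fun Γ => M / Real.log Γ) Filter.atTop (nhds 0) :=
    Filter.Tendsto.div_atTop tendsto_const_nhds Real.tendsto_log_atTop
  have habs : Filter.Tendsto (fun Γ => |Kexp a Γ / Real.log Γ - 1 / 2|)
      Filter.atTop (nhds 0) :=
    squeeze_zero' (Filter.Eventually.of_forall fun _ => abs_nonneg _) key h0
  rw [← tendsto_sub_nhds_zero_iff]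
  rw [tendsto_zero_iff_norm_tendsto_zero]
  simpa [Real.norm_eq_abs] using habs
end
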